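/- arXiv:1211.6357 — 8 statements merged into one kernel-verified Lean document; each statement's English description precedes it below -/
import Mathlib

section
/- Let R be a ring of characteristic p in which the Frobenius map is surjective (semiperfect), and let R♭ = lim_Φ R be its inverse perfection with J = ker(R♭ → R). If J is a finitely generated ideal of R♭, then the ideals Φ^n(J) and J^n are cofinal, so J is an ideal of definition and R♭ is an f-adic (topologically finitely generated adic) ring. -/
/-- The ideal generated by the image of `J` under the `n`-th iterate of the
Frobenius `Φ : x ↦ x^p`, i.e. the ideal generated by `p^n`-th powers of elements of `J`. -/
def frobPowIdeal {R : Type*} [CommRing R] (p n : ℕ) (J : Ideal R) : Ideal R :=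
  Ideal.span ((fun x => x ^ p ^ n) '' (J : Set R))

/-!
`Φ^n(J)` is generated by `p^n`-th powers of elements of `J`, so it lies in `J ^ p^n ⊆ J ^ n`.
Conversely every element of `J` has a power in `Φ^n(J)`, i.e. `J ⊆ √Φ^n(J)`, and a finitely
generated ideal contained in the radical of an ideal has a power contained in that ideal.
-/

section

variable {R : Type*} [CommRing R] (p n : ℕ) (J : Ideal R)

theorem frobPowIdeal_le_pow (hp : 1 < p) : frobPowIdeal p n J ≤ J ^ n := by
  rw [frobPowIdeal, Ideal.span_le]
  rintro _ ⟨x, hx, rfl⟩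
  exact Ideal.pow_le_pow_right (Nat.lt_pow_self hp).le (Ideal.pow_mem_pow hx _)

theorem le_radical_frobPowIdeal : J ≤ (frobPowIdeal p n J).radical :=
  fun x hx => ⟨p ^ n, Ideal.subset_span ⟨x, hx, rfl⟩⟩

theorem exists_pow_le_frobPowIdeal (hJ : J.FG) : ∃ m : ℕ, J ^ m ≤ frobPowIdeal p n J :=
  Ideal.exists_pow_le_of_le_radical_of_fg (le_radical_frobPowIdeal p n J) hJ

end

theorem stmt_0_general (p : ℕ) [Fact p.Prime] (R : Type*) [CommRing R] [CharP R p]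
    (J : Ideal (Perfection R p))
    (hfg : J.FG) :
    (∀ n : ℕ, ∃ m : ℕ, frobPowIdeal p m J ≤ J ^ n) ∧
    (∀ n : ℕ, ∃ m : ℕ, J ^ m ≤ frobPowIdeal p n J) :=
  ⟨fun n => ⟨n, frobPowIdeal_le_pow p n J (Fact.out : p.Prime).one_lt⟩,
    fun n => exists_pow_le_frobPowIdeal p n J hfg⟩

/-- Let `R` be a semiperfect ring of characteristic `p` (Frobenius
surjective), `R♭ = lim_Φ R` its inverse perfection and `J = ker (R♭ → R)`.  If `J` is
finitely generated, then the ideals `Φ^n(J)` and `J^n` are cofinal, so `J` is an ideal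
of definition and `R♭` is f-adic. -/
theorem stmt_0 (p : ℕ) [Fact p.Prime] (R : Type*) [CommRing R] [CharP R p]
    (hsurj : ∀ x : R, ∃ y : R, y ^ p = x)
    (J : Ideal (Perfection R p))
    (hJ : J = RingHom.ker (Perfection.coeff R p 0))
    (hfg : J.FG) :
    (∀ n : ℕ, ∃ m : ℕ, frobPowIdeal p m J ≤ J ^ n) ∧
    (∀ n : ℕ, ∃ m : ℕ, J ^ m ≤ frobPowIdeal p n J) :=
  stmt_0_general p R J hfg
end

section
/- Let R be a semiperfect ring of characteristic p and R♭ its inverse perfection with J = ker(R♭ → R) finitely generated. Then J' = ⋃_n Φ^{-n}(J^{p^n}) is an ideal of definition of R♭ satisfying Φ(J') = (J')^p, and R♭/J' is semiperfect and isogenous to R (i.e., the kernel of R♭/J' → R♭/J'' for the comparison is killed by a power of Frobenius). -/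
namespace Ideal

variable {A : Type*} [CommSemiring A]

theorem span_pow_card_mul_add_one_le (s : Finset A) (q : ℕ) :
    span (s : Set A) ^ (s.card * q + 1) ≤ span ((· ^ q) '' (s : Set A)) := by
  classical
  induction s using Finset.induction_on with
  | empty => simp
  | insert a s ha ih =>
    rw [Finset.card_insert_of_notMem ha, Finset.coe_insert, Set.image_insert_eq, span_insert,
      span_insert, ← span_singleton_pow, add_mul, one_mul, add_comm _ q, add_assoc]
    exact sup_pow_add_le_pow_sup_pow.trans (sup_le_sup le_rfl ih)

theorem iSup_pow_le_of_monotone {I : ℕ → Ideal A} (hI : Monotone I) (k : ℕ) :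
    (⨆ n, I n) ^ k ≤ ⨆ n, I n ^ k := by
  induction k with
  | zero => simp
  | succ k ih =>
    rw [pow_succ]
    refine (mul_mono_left ih).trans ?_
    rw [iSup_mul]
    refine iSup_le fun N => ?_
    rw [mul_iSup]
    refine iSup_le fun M => le_iSup_of_le (max N M) ?_
    rw [pow_succ]
    exact mul_mono (pow_right_mono (hI (le_max_left N M)) k) (hI (le_max_right N M))

end Ideal

theorem frobPowIdeal_mono {A : Type*} [CommRing A] (p n : ℕ) {I K : Ideal A} (h : I ≤ K) :
    frobPowIdeal p n I ≤ frobPowIdeal p n K :=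
  Ideal.span_mono (Set.image_mono h)

section Frobenius

variable {A : Type*} [CommRing A] (p : ℕ) [ExpChar A p]

theorem frobPowIdeal_eq_map (n : ℕ) (I : Ideal A) :
    frobPowIdeal p n I = I.map (iterateFrobenius A p n) :=
  rfl

theorem frobPowIdeal_zero (I : Ideal A) : frobPowIdeal p 0 I = I := by
  rw [frobPowIdeal_eq_map, iterateFrobenius_zero, Ideal.map_id]

theorem monotone_comap_iterateFrobenius_pow (J : Ideal A) :
    Monotone fun n => (J ^ p ^ n).comap (iterateFrobenius A p n) := by
  refine monotone_nat_of_le_succ fun n x hx => ?_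
  have hx' := Ideal.pow_mem_pow (Ideal.mem_comap.1 hx) p
  rw [iterateFrobenius_def, ← pow_mul, ← pow_mul, ← pow_succ] at hx'
  exact Ideal.mem_comap.2 hx'

def frobSaturation (J : Ideal A) : Ideal A :=
  ⨆ n, (J ^ p ^ n).comap (iterateFrobenius A p n)

variable {p}

theorem mem_frobSaturation {J : Ideal A} {x : A} :
    x ∈ frobSaturation p J ↔ ∃ n, x ^ p ^ n ∈ J ^ p ^ n :=
  Submodule.mem_iSup_of_directed _ (monotone_comap_iterateFrobenius_pow p J).directed_le

variable (p)

theorem coe_frobSaturation (J : Ideal A) :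
    (frobSaturation p J : Set A) = {x | ∃ n, x ^ p ^ n ∈ J ^ p ^ n} :=
  Set.ext fun _ => mem_frobSaturation

theorem le_frobSaturation (J : Ideal A) : J ≤ frobSaturation p J := fun x hx =>
  mem_frobSaturation.2 ⟨0, by simpa using hx⟩

theorem frobSaturation_pow_le_iSup (J : Ideal A) (k : ℕ) :
    frobSaturation p J ^ k ≤ ⨆ N, ((J ^ p ^ N) ^ k).comap (iterateFrobenius A p N) :=
  (Ideal.iSup_pow_le_of_monotone (monotone_comap_iterateFrobenius_pow p J) k).trans
    (iSup_mono fun _ => Ideal.le_comap_pow _ k)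

theorem frobPowIdeal_frobSaturation_le (J : Ideal A) (n : ℕ) :
    frobPowIdeal p n (frobSaturation p J) ≤ frobSaturation p J ^ p ^ n := by
  rw [frobPowIdeal_eq_map, Ideal.map_le_iff_le_comap]
  exact fun x hx => Ideal.pow_mem_pow hx _

theorem frobPowIdeal_le_frobSaturation_pow (hp : 1 < p) (J : Ideal A) (n : ℕ) :
    frobPowIdeal p n J ≤ frobSaturation p J ^ n :=
  calc frobPowIdeal p n J ≤ frobPowIdeal p n (frobSaturation p J) :=
        frobPowIdeal_mono p n (le_frobSaturation p J)
    _ ≤ frobSaturation p J ^ p ^ n := frobPowIdeal_frobSaturation_le p J n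
    _ ≤ frobSaturation p J ^ n := Ideal.pow_le_pow_right (Nat.lt_pow_self hp).le

variable [PerfectRing A p]

theorem comap_iterateFrobenius_pow_le_map_frobSaturation (J : Ideal A) (N n : ℕ) :
    (J ^ p ^ (N + n)).comap (iterateFrobenius A p N) ≤
      (frobSaturation p J).map (iterateFrobenius A p n) := by
  intro x hx
  obtain ⟨y, rfl⟩ := (bijective_iterateFrobenius A p n).2 x
  refine Ideal.mem_map_of_mem _ (mem_frobSaturation.2 ⟨N + n, ?_⟩)
  rwa [Ideal.mem_comap, iterateFrobenius_def, iterateFrobenius_def, ← pow_mul, ← pow_add,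
    add_comm n N] at hx

theorem frobPowIdeal_frobSaturation (J : Ideal A) (n : ℕ) :
    frobPowIdeal p n (frobSaturation p J) = frobSaturation p J ^ p ^ n := by
  refine le_antisymm (frobPowIdeal_frobSaturation_le p J n) <|
    (frobSaturation_pow_le_iSup p J _).trans <| iSup_le fun N => ?_
  rw [← pow_mul, ← pow_add]
  exact comap_iterateFrobenius_pow_le_map_frobSaturation p J N n

theorem frobSaturation_pow_le_frobPowIdeal {J : Ideal A} (hJ : J.FG) (n : ℕ) :
    ∃ m, frobSaturation p J ^ m ≤ frobPowIdeal p n J := by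
  obtain ⟨s, rfl⟩ := hJ
  refine ⟨s.card * p ^ n + 1, (frobSaturation_pow_le_iSup p _ _).trans <| iSup_le fun N => ?_⟩
  rw [frobPowIdeal_eq_map, Ideal.comap_le_iff_le_map _ (bijective_iterateFrobenius A p N),
    Ideal.map_map, ← iterateFrobenius_add, Ideal.map_span]
  have hexp : s.card * p ^ (N + n) + 1 ≤ p ^ N * (s.card * p ^ n + 1) := by
    have := Nat.one_le_pow N p (expChar_pos A p)
    rw [pow_add]
    nlinarith
  calc (Ideal.span (s : Set A) ^ p ^ N) ^ (s.card * p ^ n + 1)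
      ≤ Ideal.span (s : Set A) ^ (s.card * p ^ (N + n) + 1) := by
        rw [← pow_mul]
        exact Ideal.pow_le_pow_right hexp
    _ ≤ _ := Ideal.span_pow_card_mul_add_one_le s _

theorem exists_pow_mem_of_mem_frobSaturation (hp : 1 < p) {J : Ideal A} (hJ : J.FG) :
    ∃ n, ∀ x ∈ frobSaturation p J, x ^ p ^ n ∈ J := by
  obtain ⟨m, hm⟩ := frobSaturation_pow_le_frobPowIdeal p hJ 0
  rw [frobPowIdeal_zero] at hm
  exact ⟨m, fun x hx =>
    hm (Ideal.pow_le_pow_right (Nat.lt_pow_self hp).le (Ideal.pow_mem_pow hx _))⟩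

theorem Ideal.Quotient.exists_pow_eq_of_perfectRing (I : Ideal A) (y : A ⧸ I) :
    ∃ x, x ^ p = y := by
  obtain ⟨x, rfl⟩ := Ideal.Quotient.mk_surjective y
  exact ⟨Ideal.Quotient.mk I ((frobeniusEquiv A p).symm x), by
    rw [← map_pow, frobeniusEquiv_symm_pow_p]⟩

end Frobenius

theorem stmt_1_general (p : ℕ) [Fact p.Prime] (R : Type*) [CommRing R] [CharP R p]
    (J : Ideal (Perfection R p))
    (hfg : J.FG) :
    ∃ J' : Ideal (Perfection R p),
      -- J' is the union of the Φ^{-n}(J^{p^n})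
      (J' : Set (Perfection R p)) = {x | ∃ n : ℕ, x ^ p ^ n ∈ J ^ p ^ n} ∧
      -- Φ(J') = (J')^p
      frobPowIdeal p 1 J' = J' ^ p ∧
      -- J' is an ideal of definition: cofinal with the basis of ideals Φ^n(J)
      (∀ n : ℕ, ∃ m : ℕ, J' ^ m ≤ frobPowIdeal p n J) ∧
      (∀ n : ℕ, ∃ m : ℕ, frobPowIdeal p m J ≤ J' ^ n) ∧
      -- R♭/J' is semiperfect
      (∀ y : Perfection R p ⧸ J', ∃ x, x ^ p = y) ∧
      -- R♭/J' is isogenous to R: the kernel of the comparison is killed by a power of Frobenius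
      (∃ n : ℕ, ∀ x ∈ J', x ^ p ^ n ∈ J) := by
  have hp : 1 < p := (Fact.out : p.Prime).one_lt
  refine ⟨frobSaturation p J, coe_frobSaturation p J, ?_,
    frobSaturation_pow_le_frobPowIdeal p hfg,
    fun n => ⟨n, frobPowIdeal_le_frobSaturation_pow p hp J n⟩,
    Ideal.Quotient.exists_pow_eq_of_perfectRing p _,
    exists_pow_mem_of_mem_frobSaturation p hp hfg⟩
  rw [frobPowIdeal_frobSaturation, pow_one]

/-- Let `R` be a semiperfect ring of characteristic `p`, `R♭` its
inverse perfection, `J = ker (R♭ → R)` finitely generated.  Then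
`J' = ⋃_n Φ^{-n}(J^{p^n})` is an ideal of definition of `R♭` with `Φ(J') = (J')^p`, the
quotient `R♭/J'` is semiperfect, and it is isogenous to `R`: every element of `J'` is
sent into `J` by a fixed power of Frobenius. -/
theorem stmt_1 (p : ℕ) [Fact p.Prime] (R : Type*) [CommRing R] [CharP R p]
    (hsurj : ∀ x : R, ∃ y : R, y ^ p = x)
    (J : Ideal (Perfection R p))
    (hJ : J = RingHom.ker (Perfection.coeff R p 0))
    (hfg : J.FG) :
    ∃ J' : Ideal (Perfection R p),
      -- J' is the union of the Φ^{-n}(J^{p^n})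
      (J' : Set (Perfection R p)) = {x | ∃ n : ℕ, x ^ p ^ n ∈ J ^ p ^ n} ∧
      -- Φ(J') = (J')^p
      frobPowIdeal p 1 J' = J' ^ p ∧
      -- J' is an ideal of definition: cofinal with the basis of ideals Φ^n(J)
      (∀ n : ℕ, ∃ m : ℕ, J' ^ m ≤ frobPowIdeal p n J) ∧
      (∀ n : ℕ, ∃ m : ℕ, frobPowIdeal p m J ≤ J' ^ n) ∧
      -- R♭/J' is semiperfect
      (∀ y : Perfection R p ⧸ J', ∃ x, x ^ p = y) ∧
      -- R♭/J' is isogenous to R: the kernel of the comparison is killed by a power of Frobenius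
      (∃ n : ℕ, ∀ x ∈ J', x ^ p ^ n ∈ J) :=
  stmt_1_general p R J hfg
end

section
/- Being isogenous is an equivalence relation on semiperfect rings: if f : R → S is a surjection of semiperfect rings of characteristic p whose kernel I satisfies Φ^n(I) = 0 for some n, then f factors through Φ^n : R → R, yielding a map g : S → R which is also an isogeny. -/
/-! The kernel of `f` is killed by `Φ^n`, so `Φ^n : R → R` descends along `f` to `g : S → R`.
Then `g ∘ f = Φ^n` is surjective because `Φ` is, and `ker g = f (ker Φ^n)` is again killed
by `Φ^n`. -/

theorem surjective_iterateFrobenius {R : Type*} [CommSemiring R] (p : ℕ) [ExpChar R p]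
    (h : Function.Surjective (frobenius R p)) (n : ℕ) :
    Function.Surjective (iterateFrobenius R p n) := by
  rw [coe_iterateFrobenius]
  exact h.iterate n

namespace RingHom

variable {A B C : Type*} [Ring A] [Ring B] [Ring C] (f : A →+* B) (hf : Function.Surjective f)
  (g : {g : A →+* C // ker f ≤ ker g})

theorem liftOfSurjective_surjective (hg : Function.Surjective g.1) :
    Function.Surjective (f.liftOfSurjective hf g) := by
  refine Function.Surjective.of_comp (g := f) ?_
  rwa [← coe_comp, liftOfSurjective_comp]

theorem ker_liftOfSurjective : ker (f.liftOfSurjective hf g) = (ker g.1).map f := by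
  ext y
  obtain ⟨x, rfl⟩ := hf y
  rw [mem_ker, liftOfSurjective_comp_apply, ← mem_ker, Ideal.mem_map_iff_of_surjective f hf]
  refine ⟨fun hx => ⟨x, hx, rfl⟩, ?_⟩
  rintro ⟨x', hx', hxx'⟩
  have hdiff : x' - x ∈ ker g.1 := g.2 (by rw [mem_ker, map_sub, hxx', sub_self])
  simpa using sub_mem hx' hdiff

end RingHom

theorem stmt_2_general (p n : ℕ) (hp : p.Prime) {R S : Type*} [CommRing R] [CommRing S]
    [CharP R p]
    (hsurjR : ∀ x : R, ∃ y : R, y ^ p = x)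
    (f : R →+* S) (hf : Function.Surjective f)
    (hker : ∀ x ∈ RingHom.ker f, x ^ p ^ n = 0) :
    ∃ g : S →+* R,
      (∀ x : R, g (f x) = x ^ p ^ n) ∧
      Function.Surjective g ∧
      ∃ m : ℕ, ∀ y ∈ RingHom.ker g, y ^ p ^ m = 0 := by
  have : ExpChar R p := .prime hp
  let frobN : {g : R →+* R // RingHom.ker f ≤ RingHom.ker g} := ⟨iterateFrobenius R p n, hker⟩
  refine ⟨f.liftOfSurjective hf frobN, f.liftOfSurjective_comp_apply hf frobN,
    f.liftOfSurjective_surjective hf frobN (surjective_iterateFrobenius p hsurjR n), n, ?_⟩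
  intro y hy
  rw [RingHom.ker_liftOfSurjective, Ideal.mem_map_iff_of_surjective f hf] at hy
  obtain ⟨x, hx, rfl⟩ := hy
  rw [← map_pow, ← iterateFrobenius_def, RingHom.mem_ker.mp hx, map_zero]

/-- Being isogenous is an equivalence relation on semiperfect rings:
if `f : R → S` is a surjection of semiperfect rings of characteristic `p` whose kernel
is killed by `Φ^n`, then `f` factors through `Φ^n : R → R`, yielding a map `g : S → R`
which is also an isogeny. -/
theorem stmt_2 (p n : ℕ) (hp : p.Prime) {R S : Type*} [CommRing R] [CommRing S]
    [CharP R p] [CharP S p]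
    (hsurjR : ∀ x : R, ∃ y : R, y ^ p = x)
    (hsurjS : ∀ x : S, ∃ y : S, y ^ p = x)
    (f : R →+* S) (hf : Function.Surjective f)
    (hker : ∀ x ∈ RingHom.ker f, x ^ p ^ n = 0) :
    ∃ g : S →+* R,
      (∀ x : R, g (f x) = x ^ p ^ n) ∧
      Function.Surjective g ∧
      ∃ m : ℕ, ∀ y ∈ RingHom.ker g, y ^ p ^ m = 0 :=
  stmt_2_general p n hp hsurjR f hf hker
end

section
/- Let R be a perfect ring of characteristic p, W(R) its ring of Witt vectors, and J ⊆ R an ideal with Φ(J) = J^p. Then the set [J] = { Σ_{i≥0} [r_i] p^i ∈ W(R) : all r_i ∈ J } (where [·] is the Teichmüller lift) is an ideal of W(R). -/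
/-!
Give the variable `X (i, j)` of the Witt structure polynomials the weight `p ^ j`. The polynomials
`wittPolynomial p n` and hence `xInTermsOfW p n` are isobaric of weight `p ^ n`, so the structure
polynomials of an isobaric polynomial are isobaric too; for addition and multiplication (weight `0`
on the first factor) this means that the Witt vectors whose `i`-th coordinate lies in `J ^ p ^ i`
form an ideal, for any ideal `J` of any commutative ring. When the Frobenius is surjective and
`J ^ p` is the set of `p`-th powers of `J`, induction gives `J ^ p ^ i = {r ^ p ^ i | r ∈ J}`,
which describes `[J]`.
-/

open MvPolynomial

namespace MvPolynomial.IsWeightedHomogeneous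

variable {σ τ R : Type*} [CommSemiring R] {w : σ → ℕ} {φ : MvPolynomial σ R} {m : ℕ}

theorem mul_weight (hφ : φ.IsWeightedHomogeneous w m) (c : ℕ) :
    φ.IsWeightedHomogeneous (fun i => c * w i) (c * m) := by
  intro d hd
  rw [← hφ hd, Finsupp.weight_apply, Finsupp.weight_apply, Finsupp.sum, Finsupp.sum,
    Finset.mul_sum]
  simp only [smul_eq_mul, mul_left_comm]

theorem bind₁ {w' : τ → ℕ} {g : σ → MvPolynomial τ R}
    (hg : ∀ i, (g i).IsWeightedHomogeneous w' (w i)) (hφ : φ.IsWeightedHomogeneous w m) :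
    (bind₁ g φ).IsWeightedHomogeneous w' m := by
  rw [MvPolynomial.bind₁, aeval_def, eval₂_eq]
  refine IsWeightedHomogeneous.sum _ _ _ fun d hd => ?_
  have hprod := IsWeightedHomogeneous.prod d.support (fun i => g i ^ d i) _
    fun i _ => (hg i).pow (d i)
  rw [← hφ (mem_support_iff.mp hd), Finsupp.weight_apply, Finsupp.sum]
  simpa only [algebraMap_eq] using hprod.C_mul _

theorem rename {w' : τ → ℕ} (f : σ → τ) (hφ : φ.IsWeightedHomogeneous (w' ∘ f) m) :
    (rename f φ).IsWeightedHomogeneous w' m := by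
  rw [rename_eq_aeval]
  exact bind₁ (fun i => isWeightedHomogeneous_X R w' (f i)) hφ

theorem of_map {S : Type*} [CommSemiring S] {f : R →+* S} (hf : Function.Injective f)
    (h : (MvPolynomial.map f φ).IsWeightedHomogeneous w m) : φ.IsWeightedHomogeneous w m :=
  fun d hd => h <| by rwa [coeff_map, ne_eq, map_eq_zero_iff f hf]

theorem map {S : Type*} [CommSemiring S] (hφ : φ.IsWeightedHomogeneous w m) (f : R →+* S) :
    (MvPolynomial.map f φ).IsWeightedHomogeneous w m := fun d hd =>
  hφ fun h => hd <| by rw [coeff_map, h, map_zero]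

theorem aeval_mem_pow {A : Type*} [CommSemiring A] [Algebra R A]
    (hφ : φ.IsWeightedHomogeneous w m) (J : Ideal A) {v : σ → A} (hv : ∀ i, v i ∈ J ^ w i) :
    aeval v φ ∈ J ^ m := by
  rw [aeval_def, eval₂_eq]
  refine Ideal.sum_mem _ fun d hd => Ideal.mul_mem_left _ _ ?_
  rw [← hφ (mem_support_iff.mp hd), Finsupp.weight_apply, Finsupp.sum,
    ← Finset.prod_pow_eq_pow_sum]
  exact Ideal.prod_mem_prod fun i _ => by
    simpa only [smul_eq_mul, mul_comm, pow_mul] using Ideal.pow_mem_pow (hv i) (d i)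

end MvPolynomial.IsWeightedHomogeneous

namespace WittVector

variable (p : ℕ)

theorem isWeightedHomogeneous_wittPolynomial (R : Type*) [CommRing R] (n : ℕ) :
    (wittPolynomial p R n).IsWeightedHomogeneous (fun i => p ^ i) (p ^ n) := by
  refine IsWeightedHomogeneous.sum _ _ _ fun i hi => isWeightedHomogeneous_monomial _ _ _ ?_
  rw [Finsupp.weight_single, smul_eq_mul, ← pow_add,
    Nat.sub_add_cancel (Finset.mem_range_succ_iff.mp hi)]

variable [Fact p.Prime]

theorem isWeightedHomogeneous_xInTermsOfW (n : ℕ) :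
    (xInTermsOfW p ℚ n).IsWeightedHomogeneous (fun i => p ^ i) (p ^ n) := by
  induction n using Nat.strong_induction_on with
  | _ n ih =>
    rw [xInTermsOfW_eq, mul_comm]
    refine IsWeightedHomogeneous.C_mul ((isWeightedHomogeneous_X ℚ _ n).sub
      (IsWeightedHomogeneous.sum _ _ _ fun i hi => ?_)) _
    have hi := Finset.mem_range.mp hi
    simpa only [smul_eq_mul, ← pow_add, Nat.sub_add_cancel hi.le] using
      ((ih i hi).pow (p ^ (n - i))).C_mul _

theorem isWeightedHomogeneous_wittStructureInt {idx : Type*} {Φ : MvPolynomial idx ℤ}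
    {c : idx → ℕ} {d : ℕ} (hΦ : Φ.IsWeightedHomogeneous c d) (n : ℕ) :
    (wittStructureInt p Φ n).IsWeightedHomogeneous (fun s => c s.1 * p ^ s.2) (d * p ^ n) := by
  refine IsWeightedHomogeneous.of_map (Int.castRingHom ℚ).injective_int ?_
  rw [map_wittStructureInt, wittStructureRat]
  have hΦℚ : (MvPolynomial.map (Int.castRingHom ℚ) Φ).IsWeightedHomogeneous c d :=
    hΦ.map _
  refine IsWeightedHomogeneous.bind₁ (w := fun k => d * p ^ k) (fun k => ?_)
    ((isWeightedHomogeneous_xInTermsOfW p n).mul_weight d)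
  refine IsWeightedHomogeneous.bind₁ (w := fun i => c i * p ^ k) (fun i => ?_) ?_
  · exact .rename _ <| (isWeightedHomogeneous_wittPolynomial p ℚ k).mul_weight (c i)
  · simpa only [mul_comm] using hΦℚ.mul_weight (p ^ k)

variable {p} {R : Type*} [CommRing R]

theorem peval_wittStructureInt_mem_pow {k : ℕ} {Φ : MvPolynomial (Fin k) ℤ} {c : Fin k → ℕ}
    {d : ℕ} (hΦ : Φ.IsWeightedHomogeneous c d) (J : Ideal R) {x : Fin k → ℕ → R}
    (hx : ∀ b j, x b j ∈ J ^ (c b * p ^ j)) (n : ℕ) :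
    peval (wittStructureInt p Φ n) x ∈ J ^ (d * p ^ n) :=
  (isWeightedHomogeneous_wittStructureInt p hΦ n).aeval_mem_pow J fun s => hx s.1 s.2

variable (p) in
def powCoeffIdeal (J : Ideal R) : Ideal (WittVector p R) where
  carrier := {w | ∀ i, w.coeff i ∈ J ^ p ^ i}
  zero_mem' i := by simp
  add_mem' {x y} hx hy i := by
    have hadd : (X 0 + X 1 : MvPolynomial (Fin 2) ℤ).IsWeightedHomogeneous 1 1 :=
      (isWeightedHomogeneous_X ℤ 1 0).add (isWeightedHomogeneous_X ℤ 1 1)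
    rw [add_coeff, wittAdd]
    simpa using peval_wittStructureInt_mem_pow hadd J (x := ![x.coeff, y.coeff])
      (fun b j => by fin_cases b <;> simp [hx j, hy j]) i
  smul_mem' c x hx i := by
    have hmul : (X 0 * X 1 : MvPolynomial (Fin 2) ℤ).IsWeightedHomogeneous (↑) 1 :=
      (isWeightedHomogeneous_X ℤ _ 0).mul (isWeightedHomogeneous_X ℤ _ 1)
    rw [smul_eq_mul, mul_coeff, wittMul]
    simpa using peval_wittStructureInt_mem_pow hmul J (x := ![c.coeff, x.coeff])
      (fun b j => by fin_cases b <;> simp [hx j]) i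

@[simp]
theorem mem_powCoeffIdeal {J : Ideal R} {w : WittVector p R} :
    w ∈ powCoeffIdeal p J ↔ ∀ i, w.coeff i ∈ J ^ p ^ i :=
  Iff.rfl

end WittVector

theorem Ideal.coe_map_of_surjective {R S F : Type*} [Semiring R] [Semiring S] [FunLike F R S]
    [RingHomClass F R S] {f : F} (hf : Function.Surjective f) (I : Ideal R) :
    (I.map f : Set S) = f '' I :=
  Set.ext fun _ => Ideal.mem_map_iff_of_surjective f hf

theorem Ideal.coe_pow_expChar_pow_eq_image {R : Type*} [CommRing R] {p : ℕ} [ExpChar R p]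
    {J : Ideal R} (hsurj : Function.Surjective fun x : R => x ^ p)
    (hJ : ((J ^ p : Ideal R) : Set R) = (· ^ p) '' J) (n : ℕ) :
    ((J ^ p ^ n : Ideal R) : Set R) = (· ^ p ^ n) '' J := by
  have hmap : J.map (frobenius R p) = J ^ p := SetLike.coe_injective <|
    (Ideal.coe_map_of_surjective (f := frobenius R p) hsurj J).trans hJ.symm
  induction n with
  | zero => simp
  | succ n ih =>
    calc ((J ^ p ^ (n + 1) : Ideal R) : Set R)
        = ((J ^ p ^ n).map (frobenius R p) : Set R) := by
          rw [Ideal.map_pow, hmap, ← pow_mul, pow_succ']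
      _ = (· ^ p) '' ((J ^ p ^ n : Ideal R) : Set R) :=
          Ideal.coe_map_of_surjective (f := frobenius R p) hsurj _
      _ = (· ^ p ^ (n + 1)) '' J := by
          rw [ih, Set.image_image]
          simp only [← pow_mul, ← pow_succ]

/-- Let `R` be a perfect ring of characteristic `p`, `W(R)` its ring of
Witt vectors, and `J ⊆ R` an ideal with `Φ(J) = J^p` (the set of `p`-th powers of `J`
equals the ideal `J^p`).  Then the set
`[J] = { Σ_{i≥0} [r_i] p^i ∈ W(R) : all r_i ∈ J }` — described via Witt coordinates as
the set of Witt vectors whose `i`-th coordinate is a `p^i`-th power of an element of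
`J` — is an ideal of `W(R)`. -/
theorem stmt_3 (p : ℕ) [Fact p.Prime] (R : Type*) [CommRing R] [CharP R p]
    (hperf : Function.Bijective (fun x : R => x ^ p))
    (J : Ideal R)
    (hJ : ((J ^ p : Ideal R) : Set R) = (fun x => x ^ p) '' (J : Set R)) :
    ∃ I : Ideal (WittVector p R),
      (I : Set (WittVector p R)) =
        {w : WittVector p R | ∀ i : ℕ, ∃ r ∈ J, r ^ p ^ i = w.coeff i} := by
  refine ⟨WittVector.powCoeffIdeal p J,
    Set.ext fun w => WittVector.mem_powCoeffIdeal.trans <| forall_congr' fun i => ?_⟩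
  rw [← SetLike.mem_coe, Ideal.coe_pow_expChar_pow_eq_image hperf.surjective hJ]
  rfl
end

section
/- Let A be a p-adically complete p-torsion-free ring with an ideal I such that A is I-adically separated, and let w ∈ 1 + I be such that log(w) = 0 in A[1/p] (the logarithm series converging since w^p ∈ 1 + pA after suitable power). If p ≠ 2, then w^p = 1; for general p, w^4 = 1 when p = 2. In particular, in W(R♭) for R♭ perfect, log(w) = 0 with w ∈ 1 + I forces w = ±1, and w = 1 if p ≠ 2. -/
/-!
Put `x = w - 1`. Two consecutive partial sums of `log (1 + x)` lie in `p A`, so their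
difference `± x ^ (n + 1) / (n + 1)` does, hence `p ∣ x ^ n₀` for some `n₀`; binomial expansion
then gives `z := w ^ q - 1 ∈ p ^ 2 A` for `q = p ^ (n₀ + 1)`. The functional equation
`log ((1 + x) ^ q) = q log (1 + x)` holds for the truncated series up to an error divisible by
`x ^ (N + 1)`; after multiplying by `p ^ e` with `N < p ^ e` every coefficient is `p`-integral,
and `x ^ (N + 1)` is divisible by a high power of `p`. Hence `log (1 + z) ∈ p ^ m A` for every
`m`. But on `p ^ 2 A` the logarithm is `z` times a unit, so `z ∈ ⋂ p ^ m A = 0`, i.e.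
`w ^ q = 1`, and the absence of nontrivial `p`-th roots of unity congruent to `1` gives `w = 1`.
-/

open Polynomial Finset

section TruncatedLog

variable {R : Type*} [CommRing R]

/-- With `c k = a / (k + 1)` this is `a` times the truncation of `log (1 + X)` at degree `N`. -/
noncomputable def logPoly (c : ℕ → R) (N : ℕ) : R[X] :=
  ∑ k ∈ range N, C ((-1) ^ k * c k) * X ^ (k + 1)

lemma eval_zero_logPoly (c : ℕ → R) (N : ℕ) : (logPoly c N).eval 0 = 0 := by
  simp [logPoly, eval_finsetSum]

lemma derivative_logPoly {c : ℕ → R} {a : R} {N : ℕ} (hc : ∀ k < N, (k + 1 : R) * c k = a) :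
    derivative (logPoly c N) = C a * ∑ k ∈ range N, (-X) ^ k := by
  rw [logPoly, map_sum, mul_sum]
  refine sum_congr rfl fun k hk => ?_
  rw [derivative_C_mul_X_pow, ← hc k (mem_range.mp hk), neg_pow, Nat.add_sub_cancel]
  simp only [C_mul, C_pow, C_neg, map_add, map_one, map_natCast]
  push_cast
  ring

lemma X_pow_succ_dvd_of_derivative [NoZeroDivisors R] [CharZero R] {f : R[X]} {n : ℕ}
    (h0 : f.eval 0 = 0) (hd : X ^ n ∣ derivative f) : X ^ (n + 1) ∣ f := by
  rw [X_pow_dvd_iff] at hd ⊢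
  rintro (_ | d) hd'
  · rwa [coeff_zero_eq_eval_zero]
  · have h := hd d (by omega)
    rw [coeff_derivative] at h
    exact (mul_eq_zero.mp h).resolve_right (by norm_cast)

/-- The truncated form of `log ((1 + X) ^ q) = q log (1 + X)`. -/
lemma X_pow_succ_dvd_logPoly_comp_sub [NoZeroDivisors R] [CharZero R] {c : ℕ → R} {a : R}
    {N : ℕ} (hc : ∀ k < N, (k + 1 : R) * c k = a) (q : ℕ) :
    X ^ (N + 1) ∣ (logPoly c N).comp ((1 + X) ^ q - 1) - C (q : R) * logPoly c N := by
  set P : R[X] := (1 + X) ^ q - 1 with hP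
  have geom (Y : R[X]) : (1 + Y) * ∑ k ∈ range N, (-Y) ^ k = 1 - (-Y) ^ N := by
    linear_combination (-1 : R[X]) * geom_sum_mul (-Y) N
  have hXP : X ∣ P := by simp [hP, X_dvd_iff, coeff_zero_eq_eval_zero]
  have hPd : (1 + X) * derivative P = C (q : R) * (1 + P) := by
    rcases q with _ | q
    · simp [hP]
    · simp only [hP, derivative_sub, derivative_one, derivative_pow, derivative_add,
        derivative_X, Nat.add_sub_cancel]
      ring
  have key : (1 + X) * derivative ((logPoly c N).comp P - C (q : R) * logPoly c N) =
      C (q : R) * C a * ((-X) ^ N - (-P) ^ N) := by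
    simp only [derivative_sub, derivative_comp, derivative_mul, derivative_C, zero_mul, zero_add,
      derivative_logPoly hc, mul_comp, C_comp, Polynomial.sum_comp, pow_comp, neg_comp, X_comp]
    linear_combination (C a * ∑ k ∈ range N, (-P) ^ k) * hPd + C (q : R) * C a * geom P
      - C (q : R) * C a * geom X
  refine X_pow_succ_dvd_of_derivative (by simp [eval_zero_logPoly, hP]) ?_
  have hcop : IsCoprime ((X : R[X]) ^ N) (1 + X) :=
    (show IsCoprime (X : R[X]) (1 + X) from ⟨-1, 1, by ring⟩).pow_left
  refine hcop.dvd_of_dvd_mul_left (key ▸ dvd_mul_of_dvd_right (dvd_sub ?_ ?_) _)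
  · exact pow_dvd_pow_of_dvd (dvd_neg.mpr dvd_rfl) N
  · exact pow_dvd_pow_of_dvd (dvd_neg.mpr hXP) N

lemma pow_succ_dvd_aeval_logPoly_sub [NoZeroDivisors R] [CharZero R] {A : Type*} [CommRing A]
    [Algebra R A] {c : ℕ → R} {a : R} {N : ℕ} (hc : ∀ k < N, (k + 1 : R) * c k = a)
    (q : ℕ) (x : A) :
    x ^ (N + 1) ∣ aeval ((1 + x) ^ q - 1) (logPoly c N) - q * aeval x (logPoly c N) := by
  obtain ⟨G, hG⟩ := X_pow_succ_dvd_logPoly_comp_sub hc q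
  refine ⟨aeval x G, ?_⟩
  simpa [aeval_comp] using congrArg (aeval x) hG

end TruncatedLog

noncomputable def logPartialSum {B : Type*} [CommRing B] (n : ℕ) (y : B) : B :=
  ∑ k ∈ range n, (-1) ^ k * Ring.inverse ((k + 1 : ℕ) : B) * y ^ (k + 1)

lemma pow_succ_eq_logPartialSum_sub {B : Type*} [CommRing B] {n : ℕ}
    (hn : IsUnit ((n + 1 : ℕ) : B)) (y : B) :
    y ^ (n + 1) = (-1) ^ n * (n + 1 : ℕ) * (logPartialSum (n + 1) y - logPartialSum n y) := by
  have hsign : ((-1 : B) ^ n) * (-1) ^ n = 1 := by rw [← mul_pow]; simp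
  rw [logPartialSum, logPartialSum, sum_range_succ, add_sub_cancel_left]
  linear_combination (-((-1 : B) ^ n * (-1) ^ n * y ^ (n + 1))) * Ring.mul_inverse_cancel _ hn
    - y ^ (n + 1) * hsign

lemma algebraMap_aeval_logPoly {R A B : Type*} [CommRing R] [CommRing A] [Algebra R A]
    [CommRing B] [Algebra A B] {c : ℕ → R} {a : R} {N : ℕ}
    (hc : ∀ k < N, (k + 1 : R) * c k = a) (hB : ∀ k < N, IsUnit ((k + 1 : ℕ) : B)) (x : A) :
    algebraMap A B (aeval x (logPoly c N)) =
      algebraMap A B (algebraMap R A a) * logPartialSum N (algebraMap A B x) := by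
  simp only [logPoly, logPartialSum, map_sum, mul_sum, map_mul, aeval_C, map_pow, aeval_X,
    map_neg, map_one]
  refine sum_congr rfl fun k hk => ?_
  have hk' := hB k (mem_range.mp hk)
  have hck : algebraMap A B (algebraMap R A (c k)) =
      algebraMap A B (algebraMap R A a) * Ring.inverse ((k + 1 : ℕ) : B) := by
    refine hk'.mul_left_cancel ?_
    rw [mul_left_comm, Ring.mul_inverse_cancel _ hk', mul_one, ← hc k (mem_range.mp hk)]
    simp
  rw [hck]
  ring

lemma algebraMap_away_injective {A : Type*} [CommRing A] {π : A} (hπ : IsLeftRegular π) :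
    Function.Injective (algebraMap A (Localization.Away π)) :=
  IsLocalization.injective _ (Submonoid.powers_le.mpr
    (isRegular_iff_mem_nonZeroDivisors.mp (isLeftRegular_iff_isRegular.mp hπ)))

lemma IsHausdorff.eq_zero_of_forall_pow_dvd {A : Type*} [CommRing A] {π : A}
    [IsHausdorff (Ideal.span {π}) A] {z : A} (h : ∀ m, π ^ m ∣ z) : z = 0 :=
  IsHausdorff.haus' (I := Ideal.span {π}) z fun m => by
    rw [SModEq.zero, smul_eq_mul, Ideal.mul_top, Ideal.span_singleton_pow,
      Ideal.mem_span_singleton]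
    exact h m

lemma IsAdicComplete.isUnit_one_add_mul {A : Type*} [CommRing A] {π : A}
    [IsAdicComplete (Ideal.span {π}) A] (t : A) : IsUnit (1 + π * t) := by
  rw [add_comm]
  exact Ideal.mem_jacobson_bot.mp
    (IsAdicComplete.le_jacobson_bot _ (Ideal.mem_span_singleton_self π)) t

lemma eq_one_of_pow_pow_eq_one {A : Type*} [CommRing A] {I : Ideal A} {p : ℕ}
    (hroot : ∀ v : A, v - 1 ∈ I → v ^ p = 1 → v = 1) {w : A} (hw : w - 1 ∈ I) :
    ∀ t, w ^ p ^ t = 1 → w = 1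
  | 0, h => by simpa using h
  | t + 1, h => eq_one_of_pow_pow_eq_one hroot hw t <|
      hroot _ (Ideal.mem_of_dvd _ (sub_one_dvd_pow_sub_one w _) hw)
        (by rw [← pow_mul, ← pow_succ, h])

lemma sq_dvd_one_add_pow_sub_one {A : Type*} [CommRing A] {p : ℕ} (hp : p.Prime) {x : A}
    {n₀ n : ℕ} (hx : (p : A) ∣ x ^ n₀) (hn : n₀ ≤ p ^ n) :
    (p : A) ^ 2 ∣ (1 + x) ^ p ^ (n + 1) - 1 := by
  have hp1 : (p : A) ∣ (1 + x) ^ p ^ n - 1 := by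
    obtain ⟨r, hr⟩ := exists_add_pow_prime_pow_eq hp (1 : A) x n
    rw [show (1 + x) ^ p ^ n - 1 = x ^ p ^ n + p * (x * r) by rw [hr]; ring]
    exact dvd_add (hx.trans (pow_dvd_pow x hn)) (dvd_mul_right _ _)
  simpa [← pow_mul, ← pow_succ] using dvd_sub_pow_of_dvd_sub hp1 1

lemma exists_mul_add_lt_pow (a b : ℕ) {p : ℕ} (hp : 2 ≤ p) : ∃ e, a * e + b < p ^ e := by
  refine ⟨3 * (a + b + 1), ?_⟩
  set k := a + b + 1
  have hk : k < 2 ^ k := Nat.lt_two_pow_self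
  calc a * (3 * k) + b ≤ k * (3 * k) + k :=
        Nat.add_le_add (Nat.mul_le_mul_right _ (by omega)) (by omega)
    _ < (k + 1) ^ 3 := by ring_nf; nlinarith [Nat.zero_le (k ^ 3)]
    _ ≤ (2 ^ k) ^ 3 := Nat.pow_le_pow_left hk 3
    _ = 2 ^ (3 * k) := by ring
    _ ≤ p ^ (3 * k) := Nat.pow_le_pow_left hp _

namespace PadicInt

variable {p : ℕ} [Fact p.Prime]

lemma isUnit_natCast_of_not_dvd {n : ℕ} (h : ¬p ∣ n) : IsUnit (n : ℤ_[p]) :=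
  isUnit_iff.mpr (norm_natCast_eq_one_iff.mpr ((Nat.Prime.coprime_iff_not_dvd Fact.out).mpr h))

lemma natCast_dvd_pow {n e : ℕ} (hn : n ≠ 0) (hne : n ≤ p ^ e) :
    (n : ℤ_[p]) ∣ (p : ℤ_[p]) ^ e := by
  have hp : p.Prime := Fact.out
  obtain ⟨v, m, hm, rfl⟩ := Nat.exists_eq_pow_mul_and_not_dvd hn p hp.ne_one
  have hve : v ≤ e :=
    (Nat.pow_le_pow_iff_right hp.one_lt).mp ((Nat.le_mul_of_pos_right _
      (Nat.pos_of_ne_zero (right_ne_zero_of_mul hn))).trans hne)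
  push_cast
  exact ((isUnit_natCast_of_not_dvd hm).mul_right_dvd).mpr (pow_dvd_pow _ hve)

/-- Here `c = p ^ e / (k + 1)`: the point is that `p ∣ p ^ (2k) / (k + 1)` for `k ≥ 1`. -/
lemma pow_succ_dvd_mul_pow {c : ℤ_[p]} {e k : ℕ} (hk : 1 ≤ k)
    (hc : (k + 1 : ℤ_[p]) * c = p ^ e) : (p : ℤ_[p]) ^ (e + 1) ∣ c * p ^ (2 * k) := by
  have hp : p.Prime := Fact.out
  have hbound : k + 1 ≤ p ^ (2 * k - 1) :=
    calc k + 1 ≤ 2 ^ k := Nat.lt_two_pow_self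
      _ ≤ p ^ k := Nat.pow_le_pow_left hp.two_le k
      _ ≤ p ^ (2 * k - 1) := Nat.pow_le_pow_right hp.pos (by omega)
  obtain ⟨s, hs⟩ := natCast_dvd_pow (Nat.succ_ne_zero k) hbound
  have hk0 : (k + 1 : ℤ_[p]) ≠ 0 := by exact_mod_cast Nat.succ_ne_zero k
  refine ⟨s, mul_left_cancel₀ hk0 ?_⟩
  push_cast at hs
  rw [← mul_assoc, hc, show 2 * k = 2 * k - 1 + 1 by omega]
  linear_combination (p : ℤ_[p]) ^ (e + 1) * hs

end PadicInt

section PadicAlgebra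

variable {p : ℕ} [Fact p.Prime] {A : Type*} [CommRing A] [Algebra ℤ_[p] A]

lemma isUnit_natCast_of_not_dvd {n : ℕ} (h : ¬p ∣ n) : IsUnit (n : A) := by
  simpa using (PadicInt.isUnit_natCast_of_not_dvd h).map (algebraMap ℤ_[p] A)

lemma isUnit_natCast_away {n : ℕ} (hn : n ≠ 0) : IsUnit (n : Localization.Away (p : A)) := by
  have hp : p.Prime := Fact.out
  obtain ⟨v, m, hm, rfl⟩ := Nat.exists_eq_pow_mul_and_not_dvd hn p hp.ne_one
  have hpu := IsLocalization.Away.algebraMap_isUnit (S := Localization.Away (p : A)) (p : A)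
  have hmu :=
    (isUnit_natCast_of_not_dvd (A := A) hm).map (algebraMap A (Localization.Away (p : A)))
  rw [map_natCast] at hpu hmu
  push_cast
  exact (hpu.pow v).mul hmu

lemma natCast_dvd_pow_succ_of_logPartialSum
    (hinj : Function.Injective (algebraMap A (Localization.Away (p : A)))) {x a b : A} {n : ℕ}
    (ha : logPartialSum n (algebraMap A (Localization.Away (p : A)) x) =
      algebraMap A _ (p * a))
    (hb : logPartialSum (n + 1) (algebraMap A (Localization.Away (p : A)) x) =
      algebraMap A _ (p * b)) :
    (p : A) ∣ x ^ (n + 1) := by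
  refine ⟨(-1) ^ n * (n + 1 : ℕ) * (b - a), hinj ?_⟩
  rw [map_pow, pow_succ_eq_logPartialSum_sub (isUnit_natCast_away n.succ_ne_zero), ha, hb]
  simp only [map_mul, map_sub, map_pow, map_neg, map_one, map_natCast]
  ring

/-- On `p ^ 2 A` the truncated logarithm is `z` times a unit, up to the scaling `p ^ e`. -/
lemma pow_succ_mul_dvd_aeval_logPoly_sub {c : ℕ → ℤ_[p]} {e N : ℕ} (hN : 0 < N)
    (hc : ∀ k < N, (k + 1 : ℤ_[p]) * c k = p ^ e) {z : A} (hz : (p : A) ^ 2 ∣ z) :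
    (p : A) ^ (e + 1) * z ∣ aeval z (logPoly c N) - p ^ e * z := by
  obtain ⟨d, hd⟩ := hz
  obtain ⟨N, rfl⟩ : ∃ M, N = M + 1 := ⟨N - 1, by omega⟩
  have hc0 : c 0 = p ^ e := by simpa using hc 0 hN
  have hlin : aeval z (C ((-1) ^ 0 * c 0) * X ^ (0 + 1)) = p ^ e * z := by simp [hc0]
  rw [logPoly, sum_range_succ', map_add, hlin, add_sub_cancel_right, map_sum]
  refine dvd_sum fun k hk => ?_
  obtain ⟨s, hs⟩ := PadicInt.pow_succ_dvd_mul_pow (by omega) (hc (k + 1) (by simpa using hk))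
  have hs' : algebraMap ℤ_[p] A (c (k + 1)) * (p : A) ^ (2 * (k + 1)) =
      p ^ (e + 1) * algebraMap ℤ_[p] A s := by
    simpa using congrArg (algebraMap ℤ_[p] A) hs
  refine ⟨(-1) ^ (k + 1) * algebraMap ℤ_[p] A s * d ^ (k + 1), ?_⟩
  simp only [map_mul, aeval_C, aeval_X, map_pow, map_neg, map_one]
  rw [hd]
  linear_combination ((-1) ^ (k + 1) * (p : A) ^ 2 * d ^ (k + 2)) * hs'

lemma natCast_pow_dvd_one_add_pow_sub_one [IsAdicComplete (Ideal.span {(p : A)}) A]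
    (hreg : IsLeftRegular (p : A)) {x : A} {n₀ q : ℕ} (hx : (p : A) ∣ x ^ n₀)
    (hz : (p : A) ^ 2 ∣ (1 + x) ^ q - 1) {m : ℕ}
    (hlog : ∃ N₀, ∀ n ≥ N₀, ∃ a : A,
      logPartialSum n (algebraMap A (Localization.Away (p : A)) x) =
        algebraMap A _ ((p : A) ^ m * a)) :
    (p : A) ^ m ∣ (1 + x) ^ q - 1 := by
  have hp : p.Prime := Fact.out
  obtain ⟨N₀, hN₀⟩ := hlog
  obtain ⟨e, he⟩ := exists_mul_add_lt_pow n₀ (n₀ * m + N₀ + 1) hp.two_le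
  set N := p ^ e - 1
  have hN : N + 1 = p ^ e := by omega
  have hc : ∀ k < N, ∃ c : ℤ_[p], (k + 1 : ℤ_[p]) * c = p ^ e := fun k hk => by
    obtain ⟨c, hc⟩ := PadicInt.natCast_dvd_pow (p := p) (e := e) k.succ_ne_zero (by omega)
    exact ⟨c, by exact_mod_cast hc.symm⟩
  choose! c hc using hc
  obtain ⟨a, ha⟩ := hN₀ N (by omega)
  have hTx : aeval x (logPoly c N) = p ^ e * (p ^ m * a) := by
    refine algebraMap_away_injective hreg ?_
    rw [algebraMap_aeval_logPoly hc (fun k _ => isUnit_natCast_away k.succ_ne_zero), ha]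
    simp
  have hxN : (p : A) ^ e * p ^ m ∣ x ^ (N + 1) := by
    rw [← pow_add, add_comm]
    exact (pow_dvd_pow_of_dvd hx _).trans
      (by rw [← pow_mul]; exact pow_dvd_pow x (by rw [hN, mul_add]; omega))
  obtain ⟨G, hG⟩ := hxN.trans (pow_succ_dvd_aeval_logPoly_sub hc q x)
  obtain ⟨t, ht⟩ := pow_succ_mul_dvd_aeval_logPoly_sub (by omega) hc hz
  have hunit : ((1 + x) ^ q - 1) * (1 + p * t) = p ^ m * (G + q * a) :=
    hreg.pow e <| by linear_combination hG - ht + (q : A) * hTx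
  exact (IsAdicComplete.isUnit_one_add_mul t).dvd_mul_right.mp ⟨_, hunit⟩

end PadicAlgebra

theorem stmt_4_general (p : ℕ) [Fact p.Prime] (A : Type*) [CommRing A] [Algebra ℤ_[p] A]
    (I : Ideal A) (w : A) (hw : w - 1 ∈ I)
    (htf : ∀ a : A, (p : A) * a = 0 → a = 0)
    (hcomp : IsAdicComplete (Ideal.span {(p : A)}) A)
    -- log (w) = 0 : the partial sums of the log series tend to 0 p-adically in A[1/p]
    (hlog : ∀ m : ℕ, ∃ N : ℕ, ∀ n ≥ N, ∃ a : A,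
        (∑ k ∈ Finset.range n, ((-1 : Localization.Away (p : A)) ^ k) *
            Ring.inverse ((k + 1 : ℕ) : Localization.Away (p : A)) *
            (algebraMap A (Localization.Away (p : A)) (w - 1)) ^ (k + 1)) =
          algebraMap A (Localization.Away (p : A)) ((p : A) ^ m * a))
    -- no nontrivial p-th roots of unity congruent to 1 (Witt vectors of a perfect ring)
    (hpth : ∀ v : A, v - 1 ∈ I → v ^ p = 1 → v = 1) :
    (p ≠ 2 → w ^ p = 1) ∧ (p = 2 → w ^ 4 = 1) ∧ (w = 1 ∨ w = -1) ∧ (p ≠ 2 → w = 1) := by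
  suffices hw1 : w = 1 by simp [hw1]
  have hp : p.Prime := Fact.out
  have hreg : IsLeftRegular (p : A) := isLeftRegular_iff_right_eq_zero_of_mul.mpr htf
  obtain ⟨N₁, hN₁⟩ := hlog 1
  obtain ⟨a, ha⟩ := hN₁ N₁ le_rfl
  obtain ⟨b, hb⟩ := hN₁ (N₁ + 1) (by omega)
  rw [pow_one] at ha hb
  have hx := natCast_dvd_pow_succ_of_logPartialSum (algebraMap_away_injective hreg) ha hb
  have hz := sq_dvd_one_add_pow_sub_one hp hx (Nat.lt_pow_self hp.one_lt).le
  have hz0 := IsHausdorff.eq_zero_of_forall_pow_dvd fun m =>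
    natCast_pow_dvd_one_add_pow_sub_one hreg hx hz (hlog m)
  rw [add_sub_cancel, sub_eq_zero] at hz0
  exact eq_one_of_pow_pow_eq_one hpth hw _ hz0

/-- Let `A` be a `p`-adically complete, `p`-torsion-free ring
(e.g. `A = A_cris(R)`, a `ℤ_p`-algebra) with an ideal `I` for which `A` is `I`-adically
separated, and let `w ∈ 1 + I` be such that `log(w) = 0` in `A[1/p]`, in the sense that
the partial sums of the logarithm series `Σ (-1)^k (w-1)^{k+1}/(k+1)` converge
`p`-adically to `0` in `A[1/p]`.  If `p ≠ 2` then `w^p = 1`, and `w^4 = 1` when `p = 2`.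
In particular, in `W(R♭)` for `R♭` perfect — where there are no nontrivial `p`-th roots
of unity congruent to `1`, and for `p = 2` the only fourth roots of unity are `±1` —
`log(w) = 0` with `w ∈ 1 + I` forces `w = ±1`, and `w = 1` if `p ≠ 2`. -/
theorem stmt_4 (p : ℕ) [Fact p.Prime] (A : Type*) [CommRing A] [Algebra ℤ_[p] A]
    (I : Ideal A) (w : A) (hw : w - 1 ∈ I)
    (htf : ∀ a : A, (p : A) * a = 0 → a = 0)
    (hsep : ∀ a : A, (∀ m : ℕ, a ∈ Ideal.span {(p : A) ^ m}) → a = 0)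
    (hIsep : ∀ a : A, (∀ m : ℕ, a ∈ I ^ m) → a = 0)
    (hcomp : IsAdicComplete (Ideal.span {(p : A)}) A)
    -- log (w) = 0 : the partial sums of the log series tend to 0 p-adically in A[1/p]
    (hlog : ∀ m : ℕ, ∃ N : ℕ, ∀ n ≥ N, ∃ a : A,
        (∑ k ∈ Finset.range n, ((-1 : Localization.Away (p : A)) ^ k) *
            Ring.inverse ((k + 1 : ℕ) : Localization.Away (p : A)) *
            (algebraMap A (Localization.Away (p : A)) (w - 1)) ^ (k + 1)) =
          algebraMap A (Localization.Away (p : A)) ((p : A) ^ m * a))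
    -- no nontrivial p-th roots of unity congruent to 1 (Witt vectors of a perfect ring)
    (hpth : ∀ v : A, v - 1 ∈ I → v ^ p = 1 → v = 1)
    -- for p = 2, the only fourth roots of unity are ±1
    (h4 : p = 2 → ∀ v : A, v ^ 4 = 1 → v = 1 ∨ v = -1) :
    (p ≠ 2 → w ^ p = 1) ∧ (p = 2 → w ^ 4 = 1) ∧ (w = 1 ∨ w = -1) ∧ (p ≠ 2 → w = 1) :=
  stmt_4_general p A I w hw htf hcomp hlog hpth
end

section
/- The Artin–Hasse exponential AH(t) = exp(t + t^p/p + t^{p²}/p² + ...) has coefficients in ℤ_p, i.e., AH(t) ∈ ℤ_p⟦t⟧. -/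
/-!
The recurrence says `F' = F · S` with `S = ∑ᵢ X^(pⁱ - 1)`. Since `X^(p-1) · S(X^p) = S - 1`,
both `F(X)^p` and `F(X^p) · exp(pX)` solve `f' = f · pS` with constant term `1`, hence they are
equal. The coefficients of `exp(pX) - 1` are `pⁿ/n!`, divisible by `p` because `v_p(n!) < n`.
Dwork's argument then gives integrality by induction on `n`: if the coefficients of `F` below
degree `n` are integral, let `Φ` be the integral truncation of `F` below degree `n`. Comparing
`n`-th coefficients, `F^p` contributes `(Φ^p)ₙ + p·cₙ`, while `F(X^p) · exp(pX)` contributes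
`Φ(X^p)ₙ` plus a multiple of `p`; the Frobenius congruence `Φ^p ≡ Φ(X^p) mod p` then leaves
`p·cₙ ∈ pℤ_p`.
-/

open PowerSeries Finset

theorem Nat.exists_pow_eq_mul_iff {p : ℕ} (hp : 1 < p) (m : ℕ) :
    (∃ i, p ^ i = p * m) ↔ ∃ i, p ^ i = m := by
  constructor
  · rintro ⟨_ | i, hi⟩
    · have := Nat.eq_one_of_mul_eq_one_right (by simpa using hi.symm)
      omega
    · rw [pow_succ'] at hi
      exact ⟨i, Nat.eq_of_mul_eq_mul_left (by omega) hi⟩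
  · rintro ⟨i, rfl⟩
    exact ⟨i + 1, by rw [pow_succ']⟩

namespace PowerSeries

variable {R : Type*}

theorem coeff_add_X_pow_mul_pow [CommRing R] (f g : R⟦X⟧) {n : ℕ} (hn : n ≠ 0) (k : ℕ) :
    coeff n ((f + X ^ n * g) ^ k) =
      coeff n (f ^ k) + k * constantCoeff f ^ (k - 1) * constantCoeff g := by
  obtain ⟨q, hq⟩ := sq_dvd_add_pow_sub_sub (X ^ n * g) f k
  have hbinom : (f + X ^ n * g) ^ k =
      f ^ k + X ^ n * (f ^ (k - 1) * g * (k : R⟦X⟧)) + X ^ (2 * n) * (g ^ 2 * q) := by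
    rw [sub_sub, sub_eq_iff_eq_add] at hq
    rw [hq]
    ring
  rw [hbinom, map_add, map_add, coeff_X_pow_mul', coeff_X_pow_mul', if_pos le_rfl,
    if_neg (by omega), Nat.sub_self, coeff_zero_eq_constantCoeff_apply]
  simp only [map_mul, map_pow, map_natCast, add_zero]
  ring

theorem derivative_expand [CommRing R] (p : ℕ) (hp : p ≠ 0) (f : R⟦X⟧) :
    d⁄dX R (expand p hp f) = (p : R⟦X⟧) * X ^ (p - 1) * expand p hp (d⁄dX R f) := by
  rw [expand_apply, expand_apply, derivative_subst (HasSubst.X_pow hp), derivative_pow,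
    derivative_X]
  ring

theorem derivative_rescale [CommRing R] (a : R) (f : R⟦X⟧) :
    d⁄dX R (rescale a f) = C a * rescale a (d⁄dX R f) := by
  ext n
  simp only [coeff_derivative, coeff_rescale, coeff_C_mul]
  ring

theorem eq_of_derivative_eq_mul [Field R] [CharZero R] {f h g : R⟦X⟧}
    (hf : d⁄dX R f = f * g) (hh : d⁄dX R h = h * g) (hc : constantCoeff f = constantCoeff h)
    (h0 : constantCoeff h ≠ 0) : f = h := by
  have hinv := PowerSeries.inv_mul_cancel h h0
  have hquot : f * h⁻¹ = 1 := by
    refine derivative.ext ?_ ?_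
    · rw [Derivation.leibniz, derivative_inv', hf, hh, Derivation.map_one_eq_zero, smul_eq_mul,
        smul_eq_mul]
      linear_combination (-(f * g * h⁻¹)) * hinv
    · simp [hc, h0]
  calc f = f * h⁻¹ * h := by rw [mul_assoc, hinv, mul_one]
    _ = h := by rw [hquot, one_mul]

open Classical in
/-- `∑ᵢ X^(pⁱ - 1)`, the logarithmic derivative of the Artin–Hasse exponential. -/
noncomputable def artinHasseLogDeriv (R : Type*) [Semiring R] (p : ℕ) : R⟦X⟧ :=
  mk fun k => if ∃ i, p ^ i = k + 1 then 1 else 0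

theorem X_pow_mul_expand_artinHasseLogDeriv [CommRing R] {p : ℕ} (hp : 1 < p) :
    X ^ (p - 1) * expand p (by omega) (artinHasseLogDeriv R p) = artinHasseLogDeriv R p - 1 := by
  ext k
  rw [coeff_X_pow_mul', coeff_expand, map_sub, coeff_one, artinHasseLogDeriv, coeff_mk, coeff_mk]
  by_cases hdvd : p ∣ k + 1
  · obtain ⟨m, hm⟩ := hdvd
    have hm0 : m ≠ 0 := by rintro rfl; omega
    have hpm : p ≤ p * m := Nat.le_mul_of_pos_right p (by omega)
    have hk : k - (p - 1) = p * (m - 1) := by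
      rw [Nat.mul_sub, mul_one]
      omega
    rw [if_pos (by omega), hk, if_pos (dvd_mul_right p _), Nat.mul_div_cancel_left _ (by omega),
      if_neg (show k ≠ 0 by omega), sub_zero, hm, Nat.exists_pow_eq_mul_iff hp,
      Nat.sub_add_cancel (by omega)]
  · have hlhs : ¬ (p - 1 ≤ k ∧ p ∣ k - (p - 1)) := by
      rintro ⟨hle, hd⟩
      exact hdvd (by
        simpa [show k - (p - 1) + p = k + 1 by omega] using Nat.dvd_add_self_right.2 hd)
    have hrhs : (∃ i, p ^ i = k + 1) ↔ k = 0 := by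
      constructor
      · rintro ⟨_ | i, hi⟩
        · simpa using hi.symm
        · exact absurd ⟨p ^ i, by rw [← hi, pow_succ']⟩ hdvd
      · rintro rfl
        exact ⟨0, rfl⟩
    rw [ite_eq_right_iff.2 fun hle => if_neg fun hd => hlhs ⟨hle, hd⟩]
    simp only [hrhs]
    split_ifs <;> simp

open Classical in
theorem derivative_eq_mul_artinHasseLogDeriv [CommRing R] {p : ℕ} {F : R⟦X⟧}
    (hF : ∀ n : ℕ, ((n + 1 : ℕ) : R) * coeff (n + 1) F =
      ∑ j ∈ (range (n + 1)).filter (fun j => ∃ i : ℕ, p ^ i = n + 1 - j), coeff j F) :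
    d⁄dX R F = F * artinHasseLogDeriv R p := by
  ext n
  rw [coeff_derivative, coeff_mul, Nat.sum_antidiagonal_eq_sum_range_succ_mk, mul_comm,
    ← Nat.cast_add_one, hF, sum_filter]
  refine sum_congr rfl fun j hj => ?_
  rw [artinHasseLogDeriv, coeff_mk, show n - j + 1 = n + 1 - j by
    have := mem_range.1 hj
    omega]
  split_ifs <;> simp

theorem pow_eq_expand_mul_rescale_exp [Field R] [CharZero R] {p : ℕ} (hp : 1 < p) {F : R⟦X⟧}
    (hF0 : constantCoeff F = 1) (hF : d⁄dX R F = F * artinHasseLogDeriv R p) :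
    F ^ p = expand p (by omega) F * rescale (p : R) (exp R) := by
  have hpow : d⁄dX R (F ^ p) = F ^ p * (C (p : R) * artinHasseLogDeriv R p) := by
    rw [derivative_pow, hF, map_natCast]
    calc (p : R⟦X⟧) * F ^ (p - 1) * (F * artinHasseLogDeriv R p)
        = (p : R⟦X⟧) * (F ^ (p - 1 + 1) * artinHasseLogDeriv R p) := by ring
      _ = _ := by rw [Nat.sub_add_cancel hp.le]; ring
  have hexpand : d⁄dX R (expand p (by omega) F * rescale (p : R) (exp R)) =
      expand p (by omega) F * rescale (p : R) (exp R) * (C (p : R) * artinHasseLogDeriv R p) := by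
    rw [Derivation.leibniz, derivative_expand, derivative_rescale, derivative_exp, hF, map_mul,
      smul_eq_mul, smul_eq_mul, map_natCast]
    linear_combination (p : R⟦X⟧) * expand p (by omega) F * rescale (p : R) (exp R) *
      X_pow_mul_expand_artinHasseLogDeriv (R := R) hp
  have hE0 : constantCoeff (rescale (p : R) (exp R)) = 1 := by
    rw [← coeff_zero_eq_constantCoeff_apply, coeff_rescale]
    simp
  exact eq_of_derivative_eq_mul hpow hexpand (by simp [hF0, hE0]) (by simp [hF0, hE0])

end PowerSeries

section Padic

variable {p : ℕ} [hp : Fact p.Prime]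

theorem PadicInt.dvd_coeff_pow_sub_coeff_expand (Φ : ℤ_[p]⟦X⟧) (n : ℕ) :
    (p : ℤ_[p]) ∣ coeff n (Φ ^ p) - coeff n (expand p hp.out.ne_zero Φ) := by
  have hfrob : map PadicInt.toZMod (Φ ^ p) = map PadicInt.toZMod (expand p hp.out.ne_zero Φ) := by
    rw [map_pow, map_expand, ← MvPowerSeries.map_frobenius_expand p hp.out.ne_zero,
      ZMod.frobenius_zmod]
    rfl
  rw [← Ideal.mem_span_singleton, ← PadicInt.maximalIdeal_eq_span_p, ← PadicInt.ker_toZMod,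
    RingHom.mem_ker, map_sub, ← coeff_map, ← coeff_map, hfrob, sub_self]

theorem Padic.norm_pow_div_factorial_le {n : ℕ} (hn : n ≠ 0) :
    ‖(p : ℚ_[p]) ^ n / n.factorial‖ ≤ ‖(p : ℚ_[p])‖ := by
  have hv : padicValNat p n.factorial < n := padicValNat_factorial_lt_of_ne_zero p hn
  have hp1 : (1 : ℝ) ≤ p := by exact_mod_cast hp.out.one_lt.le
  rw [norm_div, Padic.norm_p_pow,
    Padic.norm_eq_zpow_neg_valuation (Nat.cast_ne_zero.2 n.factorial_ne_zero),
    Padic.valuation_natCast, Padic.norm_p, ← zpow_sub₀ (by positivity), ← zpow_neg_one]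
  exact zpow_le_zpow_right₀ hp1 (by omega)

theorem Padic.norm_coeff_rescale_exp_sub_one_le (j : ℕ) :
    ‖coeff j (rescale (p : ℚ_[p]) (exp ℚ_[p]) - 1)‖ ≤ ‖(p : ℚ_[p])‖ := by
  rcases eq_or_ne j 0 with rfl | hj
  · simp [-coeff_zero_eq_constantCoeff]
  · simpa [coeff_one, hj, div_eq_mul_inv] using Padic.norm_pow_div_factorial_le (p := p) hj

namespace PowerSeries

theorem norm_coeff_expand_le_one {F : ℚ_[p]⟦X⟧} {n : ℕ} (hn : n ≠ 0)
    (ih : ∀ k < n, ‖coeff k F‖ ≤ 1) {i : ℕ} (hi : i ≤ n) :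
    ‖coeff i (expand p hp.out.ne_zero F)‖ ≤ 1 := by
  rw [coeff_expand]
  split_ifs
  · refine ih _ ?_
    rcases eq_or_ne i 0 with rfl | hi0
    · simpa [Nat.pos_iff_ne_zero]
    · exact (Nat.div_lt_self (by omega) hp.out.one_lt).trans_le hi
  · simp

theorem norm_coeff_pow_sub_coeff_expand_sub_le {F : ℚ_[p]⟦X⟧} (hF : constantCoeff F = 1)
    {n : ℕ} (hn : n ≠ 0) (ih : ∀ k < n, ‖coeff k F‖ ≤ 1) :
    ‖coeff n (F ^ p) - coeff n (expand p hp.out.ne_zero F) - p * coeff n F‖ ≤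
      ‖(p : ℚ_[p])‖ := by
  let y : ∀ k < n, ℤ_[p] := fun k hk => ⟨coeff k F, ih k hk⟩
  let Φ : ℤ_[p]⟦X⟧ := mk fun k => if hk : k < n then y k hk else 0
  set T := map PadicInt.Coe.ringHom Φ
  have hT : ∀ k, coeff k T = if k < n then coeff k F else 0 := by
    intro k
    by_cases hk : k < n
    · simp only [T, Φ, coeff_map, coeff_mk, dif_pos hk, if_pos hk]
      rfl
    · simp [T, Φ, hk]
  obtain ⟨s, hs⟩ : X ^ n ∣ F - T := X_pow_dvd_iff.2 fun k hk => by simp [hT, hk]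
  have hs0 : constantCoeff s = coeff n F := by
    have := congrArg (coeff n) hs
    rwa [map_sub, hT, if_neg (lt_irrefl n), sub_zero, coeff_X_pow_mul', if_pos le_rfl,
      Nat.sub_self, coeff_zero_eq_constantCoeff_apply, eq_comm] at this
  have hT0 : constantCoeff T = 1 := by
    rw [← coeff_zero_eq_constantCoeff_apply, hT, if_pos (Nat.pos_of_ne_zero hn),
      coeff_zero_eq_constantCoeff_apply, hF]
  have hpow : coeff n (F ^ p) = coeff n (T ^ p) + p * coeff n F := by
    conv_lhs => rw [show F = T + X ^ n * s by rw [← hs]; ring]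
    rw [coeff_add_X_pow_mul_pow _ _ hn, hT0, one_pow, mul_one, hs0]
  have hexpand : coeff n (expand p hp.out.ne_zero T) = coeff n (expand p hp.out.ne_zero F) := by
    rw [coeff_expand, coeff_expand]
    split_ifs
    · rw [hT, if_pos (Nat.div_lt_self (Nat.pos_of_ne_zero hn) hp.out.one_lt)]
    · rfl
  obtain ⟨z, hz⟩ := PadicInt.dvd_coeff_pow_sub_coeff_expand Φ n
  have hfrob : coeff n (T ^ p) - coeff n (expand p hp.out.ne_zero T) = p * z := by
    rw [← map_pow, ← map_expand, coeff_map, coeff_map, ← map_sub, hz, map_mul, map_natCast]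
    rfl
  have hcongr :
      coeff n (F ^ p) - coeff n (expand p hp.out.ne_zero F) - p * coeff n F = p * z := by
    rw [hpow, ← hexpand]
    linear_combination hfrob
  rw [hcongr, norm_mul, PadicInt.padic_norm_e_of_padicInt]
  exact mul_le_of_le_one_right (norm_nonneg _) (PadicInt.norm_le_one z)

theorem norm_coeff_expand_mul_sub_le {F E : ℚ_[p]⟦X⟧} {n : ℕ} (hn : n ≠ 0)
    (ih : ∀ k < n, ‖coeff k F‖ ≤ 1) (hE : ∀ j, ‖coeff j (E - 1)‖ ≤ ‖(p : ℚ_[p])‖) :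
    ‖coeff n (expand p hp.out.ne_zero F * E) - coeff n (expand p hp.out.ne_zero F)‖ ≤
      ‖(p : ℚ_[p])‖ := by
  rw [← map_sub, ← mul_sub_one, coeff_mul]
  refine IsUltrametricDist.norm_sum_le_of_forall_le_of_nonneg (norm_nonneg _) fun ij hij => ?_
  rw [norm_mul]
  exact (mul_le_of_le_one_left (norm_nonneg _)
    (norm_coeff_expand_le_one hn ih (HasAntidiagonal.antidiagonal.fst_le hij))).trans (hE _)

/-- Dwork's lemma: `F(X)^p = F(X^p) · E` with `E ≡ 1 mod p` forces `F` to be integral. -/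
theorem norm_coeff_le_one_of_pow_eq_expand_mul {F E : ℚ_[p]⟦X⟧} (hF : constantCoeff F = 1)
    (hE : ∀ j, ‖coeff j (E - 1)‖ ≤ ‖(p : ℚ_[p])‖) (h : F ^ p = expand p hp.out.ne_zero F * E)
    (n : ℕ) : ‖coeff n F‖ ≤ 1 := by
  induction n using Nat.strong_induction_on with
  | _ n ih =>
  rcases eq_or_ne n 0 with rfl | hn
  · simp [coeff_zero_eq_constantCoeff_apply, hF]
  have hpow := norm_coeff_pow_sub_coeff_expand_sub_le hF hn ih
  have hmul := norm_coeff_expand_mul_sub_le hn ih hE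
  rw [← h] at hmul
  have hp0 : 0 < ‖(p : ℚ_[p])‖ := norm_pos_iff.2 (Nat.cast_ne_zero.2 hp.out.ne_zero)
  refine le_of_mul_le_mul_left ?_ hp0
  rw [mul_one, ← norm_mul]
  calc ‖(p : ℚ_[p]) * coeff n F‖
      = ‖(coeff n (F ^ p) - coeff n (expand p hp.out.ne_zero F)) +
          -(coeff n (F ^ p) - coeff n (expand p hp.out.ne_zero F) - p * coeff n F)‖ := by
        ring_nf
    _ ≤ ‖(p : ℚ_[p])‖ :=
      (IsUltrametricDist.norm_add_le_max _ _).trans (max_le hmul (by rwa [norm_neg]))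

end PowerSeries

end Padic

open Classical in
/-- The Artin–Hasse exponential
`AH(t) = exp(t + t^p/p + t^{p²}/p² + ⋯)` has coefficients in `ℤ_p`.  Here `AH` is
characterized (equivalently to the exponential formula, in characteristic zero) by
`AH(0) = 1` together with the differential equation
`AH'(t) = AH(t) · (1 + t^{p-1} + t^{p²-1} + ⋯)`, i.e. by the coefficient recurrence
`(n+1)·c_{n+1} = Σ_{j ≤ n, n+1-j a power of p} c_j`. -/
theorem stmt_7 (p : ℕ) [Fact p.Prime] (F : PowerSeries ℚ_[p])
    (h0 : PowerSeries.coeff 0 F = 1)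
    (hAH : ∀ n : ℕ, ((n + 1 : ℕ) : ℚ_[p]) * PowerSeries.coeff (n + 1) F =
        ∑ j ∈ (Finset.range (n + 1)).filter (fun j => ∃ i : ℕ, p ^ i = n + 1 - j),
          PowerSeries.coeff j F) :
    ∀ n : ℕ, ‖PowerSeries.coeff n F‖ ≤ 1 := by
  rw [coeff_zero_eq_constantCoeff_apply] at h0
  have hlogDeriv := derivative_eq_mul_artinHasseLogDeriv hAH
  have hpow := pow_eq_expand_mul_rescale_exp (Fact.out : p.Prime).one_lt h0 hlogDeriv
  exact norm_coeff_le_one_of_pow_eq_expand_mul h0 Padic.norm_coeff_rescale_exp_sub_one_le hpow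
end

section
/- For all n ≥ 1 and primes p, the number (np)!/(p·n!) is an integer and (n!)^{p-1} divides (np)!/(p·n!) in ℤ. -/
/-- For every prime `p` and every `n ≥ 1`, the integer `(np)!/(p·n!)`
is divisible by `(n!)^{p-1}`; equivalently, `p·n!` divides `(np)!` and `(n!)^{p-1}`
divides the exact quotient `(np)!/(p·n!)`. -/
theorem stmt_11 (p n : ℕ) (hp : p.Prime) (hn : 1 ≤ n) :
    p * n.factorial ∣ (n * p).factorial ∧
      n.factorial ^ (p - 1) ∣ (n * p).factorial / (p * n.factorial) := by
  have hn0 : n ≠ 0 := by omega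
  have hp1 : 1 ≤ p := hp.one_lt.le
  have key : (n * p).factorial =
      (p * n.factorial) * (n.factorial ^ (p - 1) * (Nat.uniformBell p n * (p - 1).factorial)) := by
    rw [mul_comm n p, ← Nat.uniformBell_mul_eq p hn0]
    have hfac : p.factorial = p * (p - 1).factorial := by
      conv_lhs => rw [show p = (p - 1) + 1 by omega]
      rw [Nat.factorial_succ]
      congr 1; omega
    have hpow : n.factorial ^ p = n.factorial * n.factorial ^ (p - 1) := by
      conv_lhs => rw [show p = 1 + (p - 1) by omega]
      rw [pow_add, pow_one]
    rw [hfac, hpow]; ring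
  constructor
  · exact ⟨_, key⟩
  · rw [key, Nat.mul_div_cancel_left _ (by positivity)]
    exact ⟨_, rfl⟩
end

section
/- Let R = 𝔽_p[X^{1/p^∞}]/X (so R♭ = 𝔽_p⟦X^{1/p^∞}⟧ with X non-torsion). Then A_cris(R) is p-torsion free. More precisely, in the presentation A_cris(R) = W(R♭)⟨T⟩_PD / (X - T) (p-adically completed free PD polynomial algebra), if (X - T)·Σ b_n γ_n(T) = p·Σ a_n γ_n(T), then all b_n are divisible by p, and hence Σ a_n γ_n(T) maps to 0 in A_cris(R). -/
/-!
Reducing the relation `(X - T)·Σ b_n γ_n(T) = p·Σ a_n γ_n(T)` modulo `p` gives `ξ·b_0 ≡ 0` and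
`ξ·b_{n+1} ≡ (n+1)·b_n`, so since `ξ` is a nonzerodivisor modulo `p`, induction on `n` shows
`p ∣ b_n` for all `n`. Writing `b_n = p·c_n` and cancelling `p` (`W` is `p`-torsion free) gives
`Σ a_n γ_n(T) = (X - T)·Σ c_n γ_n(T)`, and `c` still tends to `0` `p`-adically.
-/

namespace ACris

variable {W : Type*} [CommRing W]

/-- Coefficients of `(X - T)·Σ b_n γ_n(T)` in the basis `γ_n(T)`, using `T·γ_n(T) = (n+1)·γ_{n+1}(T)`
and writing `ξ` for the Teichmüller lift of `X`. -/
def xSubTMul (ξ : W) (b : ℕ → W) : ℕ → W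
  | 0 => ξ * b 0
  | n + 1 => ξ * b (n + 1) - ((n + 1 : ℕ) : W) * b n

theorem xSubTMul_const_mul (ξ p : W) (c : ℕ → W) (n : ℕ) :
    xSubTMul ξ (fun k => p * c k) n = p * xSubTMul ξ c n := by
  cases n <;> simp only [xSubTMul] <;> ring

theorem dvd_of_mul_eq_xSubTMul {p ξ : W} (hξ : ∀ w : W, p ∣ ξ * w → p ∣ w) {a b : ℕ → W}
    (h : ∀ n, p * a n = xSubTMul ξ b n) (n : ℕ) : p ∣ b n := by
  induction n with
  | zero => exact hξ _ ⟨a 0, (h 0).symm⟩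
  | succ n ih =>
    obtain ⟨w, hw⟩ := ih
    refine hξ _ ⟨a (n + 1) + ((n + 1 : ℕ) : W) * w, ?_⟩
    have hsucc : p * a (n + 1) = ξ * b (n + 1) - ((n + 1 : ℕ) : W) * b n := h (n + 1)
    linear_combination -hsucc + ((n + 1 : ℕ) : W) * hw

theorem mem_span_pow_of_mul_mem_span_pow_succ {p c : W} (hp : IsLeftRegular p) {m : ℕ}
    (h : p * c ∈ Ideal.span {p ^ (m + 1)}) : c ∈ Ideal.span {p ^ m} := by
  rw [Ideal.mem_span_singleton, pow_succ'] at h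
  exact Ideal.mem_span_singleton.mpr (hp.dvd_cancel_left.mp h)

end ACris

open ACris in
theorem stmt_12_general (p : ℕ) (W : Type*) [CommRing W]
    (htf : ∀ w : W, (p : W) * w = 0 → w = 0)
    (ξ : W) (hξ : ∀ w : W, (p : W) ∣ ξ * w → (p : W) ∣ w)
    (a b : ℕ → W)
    (hb : ∀ m : ℕ, ∃ N : ℕ, ∀ n ≥ N, b n ∈ Ideal.span {(p : W) ^ m})
    (h0 : (p : W) * a 0 = ξ * b 0)
    (hrec : ∀ n : ℕ, (p : W) * a (n + 1) = ξ * b (n + 1) - ((n + 1 : ℕ) : W) * b n) :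
    (∀ n : ℕ, (p : W) ∣ b n) ∧
    ∃ c : ℕ → W,
      (∀ m : ℕ, ∃ N : ℕ, ∀ n ≥ N, c n ∈ Ideal.span {(p : W) ^ m}) ∧
      a 0 = ξ * c 0 ∧
      ∀ n : ℕ, a (n + 1) = ξ * c (n + 1) - ((n + 1 : ℕ) : W) * c n := by
  have hp : IsLeftRegular (p : W) := isLeftRegular_of_non_zero_divisor _ htf
  have hrel : ∀ n, (p : W) * a n = xSubTMul ξ b n := by
    rintro (_ | n)
    exacts [h0, hrec n]
  have hdvd := dvd_of_mul_eq_xSubTMul hξ hrel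
  refine ⟨hdvd, ?_⟩
  choose c hc using hdvd
  have hac : ∀ n, a n = xSubTMul ξ c n := fun n =>
    hp <| show (p : W) * a n = p * xSubTMul ξ c n by
      rw [hrel, ← xSubTMul_const_mul, ← funext hc]
  refine ⟨c, fun m => ?_, hac 0, fun n => hac (n + 1)⟩
  obtain ⟨N, hN⟩ := hb (m + 1)
  exact ⟨N, fun n hn => mem_span_pow_of_mul_mem_span_pow_succ hp (hc n ▸ hN n hn)⟩

/-- Let `R = 𝔽_p[X^{1/p^∞}]/X`, so that `R♭ = 𝔽_p⟦X^{1/p^∞}⟧` and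
`W = W(R♭)` is `p`-torsion free with `X` (Teichmüller lift `ξ`) a non-torsion element
(`ξ` is a nonzerodivisor modulo `p`).  Then `A_cris(R)` is `p`-torsion free.  More
precisely, in the presentation `A_cris(R) = W⟨T⟩_PD/(X - T)`, if
`(X - T)·Σ b_n γ_n(T) = p·Σ a_n γ_n(T)` — i.e. coefficientwise `p·a_0 = ξ·b_0` and
`p·a_{n+1} = ξ·b_{n+1} - (n+1)·b_n` — then all `b_n` are divisible by `p`, and hence
`Σ a_n γ_n(T)` lies in the ideal `(X - T)`, i.e. maps to `0` in `A_cris(R)`. -/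
theorem stmt_12 (p : ℕ) (hp : p.Prime) (W : Type*) [CommRing W]
    (htf : ∀ w : W, (p : W) * w = 0 → w = 0)
    (ξ : W) (hξ : ∀ w : W, (p : W) ∣ ξ * w → (p : W) ∣ w)
    (a b : ℕ → W)
    (ha : ∀ m : ℕ, ∃ N : ℕ, ∀ n ≥ N, a n ∈ Ideal.span {(p : W) ^ m})
    (hb : ∀ m : ℕ, ∃ N : ℕ, ∀ n ≥ N, b n ∈ Ideal.span {(p : W) ^ m})
    (h0 : (p : W) * a 0 = ξ * b 0)
    (hrec : ∀ n : ℕ, (p : W) * a (n + 1) = ξ * b (n + 1) - ((n + 1 : ℕ) : W) * b n) :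
    (∀ n : ℕ, (p : W) ∣ b n) ∧
    ∃ c : ℕ → W,
      (∀ m : ℕ, ∃ N : ℕ, ∀ n ≥ N, c n ∈ Ideal.span {(p : W) ^ m}) ∧
      a 0 = ξ * c 0 ∧
      ∀ n : ℕ, a (n + 1) = ξ * c (n + 1) - ((n + 1 : ℕ) : W) * c n :=
  stmt_12_general p W htf ξ hξ a b hb h0 hrec
end
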